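/- Let (X,d) be a metric space, Λ > 0, and let D : X × X → ℝ be a pseudometric on X (nonnegative, symmetric, vanishing on the diagonal, satisfying the triangle inequality) such that D(x,y) ≤ 1 + d(x,y) for all x,y ∈ X. Let α : ℝ → X be a geodesic line, i.e. d(α(s), α(t)) = |s−t| for all s,t ∈ ℝ, and suppose that for all s ≤ t ≤ u one has D(α(s), α(t)) + D(α(t), α(u)) ≤ D(α(s), α(u)) + 6Λ. Then α is an unparametrised 2·(max{6Λ,1}+1)-rough geodesic with respect to D: there exist an interval I ⊆ ℝ and a weakly increasing map r : I → ℝ such that the map α∘r : I → X satisfies |s−t| − 2·(max{6Λ,1}+1) ≤ D(α(r(s)), α(r(t))) ≤ |s−t| + 2·(max{6Λ,1}+1) for all s,t ∈ I, and moreover every point of the image of α lies at D-distance at most 6Λ+1 from the image of α∘r. -/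
import Mathlib

/-- Auxiliary: lower estimate for the value of a roughly-continuous function at the
infimum of a set on which it is `≥ c`. -/
private lemma rough_inf_lower (F : ℝ → ℝ)
    (key3 : ∀ s t : ℝ, s ≤ t → (0 ≤ s ∨ t ≤ 0) → F t ≤ F s + (1 + (t - s)))
    (S : Set ℝ) (hne : S.Nonempty) (hbdd : BddBelow S) (c : ℝ)
    (hc : ∀ t ∈ S, c ≤ F t) : c - 1 ≤ F (sInf S) := by
  refine le_of_forall_pos_le_add fun ε hε => ?_
  obtain ⟨ε', hε'1, hε'2, hε'3⟩ : ∃ ε', 0 < ε' ∧ ε' ≤ ε ∧ (sInf S < 0 → sInf S + ε' ≤ 0) := by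
    rcases lt_or_ge (sInf S) 0 with h | h
    · exact ⟨min ε (-(sInf S)), lt_min hε (by linarith), min_le_left _ _, fun _ => by
        have := min_le_right ε (-(sInf S)); linarith⟩
    · exact ⟨ε, hε, le_rfl, fun h' => absurd h' (not_lt.mpr h)⟩
  obtain ⟨t', ht'S, ht'⟩ := exists_lt_of_csInf_lt hne
    (show sInf S < sInf S + ε' by linarith)
  have h1 : sInf S ≤ t' := csInf_le hbdd ht'S
  have h2 : F t' ≤ F (sInf S) + (1 + (t' - sInf S)) := by
    refine key3 (sInf S) t' h1 ?_
    rcases lt_or_ge (sInf S) 0 with h | h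
    · exact Or.inr (by have := hε'3 h; linarith)
    · exact Or.inl h
  have h3 := hc t' ht'S
  linarith

/-- Auxiliary: upper estimate for the value of a roughly-continuous function at the
infimum of a set, given that the function is `< c` just below the infimum. -/
private lemma rough_inf_upper (F : ℝ → ℝ)
    (key3 : ∀ s t : ℝ, s ≤ t → (0 ≤ s ∨ t ≤ 0) → F t ≤ F s + (1 + (t - s)))
    (hF0 : F 0 = 0) (hFlb : ∀ s : ℝ, s ≤ 0 → s - 1 ≤ F s)
    (S : Set ℝ) (c γ : ℝ) (hγ : γ < sInf S)
    (hs : ∀ s, γ ≤ s → s < sInf S → F s < c) : F (sInf S) ≤ c + 1 := by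
  refine le_of_forall_pos_le_add fun ε hε => ?_
  rcases lt_trichotomy (sInf S) 0 with h | h | h
  · have hs1 : max γ (sInf S - ε) < sInf S := max_lt hγ (by linarith)
    have h2 : F (sInf S) ≤ F (max γ (sInf S - ε)) + (1 + (sInf S - max γ (sInf S - ε))) :=
      key3 _ _ hs1.le (Or.inr (by linarith))
    have h3 : F (max γ (sInf S - ε)) < c := hs _ (le_max_left _ _) hs1
    have h4 : sInf S - ε ≤ max γ (sInf S - ε) := le_max_right _ _
    linarith
  · have hs1 : max γ (-ε) < sInf S := max_lt hγ (by rw [h]; linarith)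
    have h3 : F (max γ (-ε)) < c := hs _ (le_max_left _ _) hs1
    have h4 : max γ (-ε) - 1 ≤ F (max γ (-ε)) := hFlb _ (by rw [h] at hs1; linarith)
    have h5 : -ε ≤ max γ (-ε) := le_max_right _ _
    rw [h, hF0]
    linarith
  · have hs1 : max (max γ 0) (sInf S - ε) < sInf S := max_lt (max_lt hγ h) (by linarith)
    have h0s : 0 ≤ max (max γ 0) (sInf S - ε) :=
      le_trans (le_max_right γ 0) (le_max_left _ _)
    have h2 : F (sInf S) ≤ F (max (max γ 0) (sInf S - ε))
        + (1 + (sInf S - max (max γ 0) (sInf S - ε))) :=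
      key3 _ _ hs1.le (Or.inl h0s)
    have h3 : F (max (max γ 0) (sInf S - ε)) < c :=
      hs _ (le_trans (le_max_left γ 0) (le_max_left _ _)) hs1
    have h4 : sInf S - ε ≤ max (max γ 0) (sInf S - ε) := le_max_right _ _
    linarith

/-- Geodesics of a CAT(0) space are unparametrised rough geodesics of the curtain
model (abstract core): if `D` is a pseudometric on `X` with `D(x,y) ≤ 1 + d(x,y)` and
`α : ℝ → X` is a `d`-geodesic line along which `D` satisfies the `6Λ`-reverse triangle
inequality, then there are an interval `I ⊆ ℝ` and a weakly increasing `r : I → ℝ`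
making `α ∘ r` a `2(max{6Λ,1}+1)`-rough geodesic for `D` whose image is
`(6Λ+1)`-dense in the image of `α` for `D`. -/
theorem geodesics_unparametrised_rough_geodesics
    {X : Type*} [MetricSpace X] (Λ : ℝ) (hΛ : 0 < Λ)
    (D : X → X → ℝ)
    (hD_self : ∀ x, D x x = 0)
    (hD_symm : ∀ x y, D x y = D y x)
    (hD_nonneg : ∀ x y, 0 ≤ D x y)
    (hD_tri : ∀ x y z, D x z ≤ D x y + D y z)
    (hD_le : ∀ x y, D x y ≤ 1 + dist x y)
    (α : ℝ → X)
    (hα : ∀ s t : ℝ, dist (α s) (α t) = |s - t|)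
    (hrev : ∀ s t u : ℝ, s ≤ t → t ≤ u →
      D (α s) (α t) + D (α t) (α u) ≤ D (α s) (α u) + 6 * Λ) :
    ∃ (I : Set ℝ), I.OrdConnected ∧ ∃ r : ℝ → ℝ, MonotoneOn r I ∧
      (∀ s ∈ I, ∀ t ∈ I,
        |s - t| - 2 * (max (6 * Λ) 1 + 1) ≤ D (α (r s)) (α (r t)) ∧
        D (α (r s)) (α (r t)) ≤ |s - t| + 2 * (max (6 * Λ) 1 + 1)) ∧
      ∀ u : ℝ, ∃ s ∈ I, D (α u) (α (r s)) ≤ 6 * Λ + 1 := by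
  have hLpos : 0 < 6 * Λ := by linarith
  -- distance bound along the geodesic
  have hDd : ∀ s t : ℝ, D (α s) (α t) ≤ 1 + |s - t| := fun s t => by
    have := hD_le (α s) (α t); rwa [hα] at this
  -- the signed cumulative function
  set F : ℝ → ℝ := fun t => if 0 ≤ t then D (α 0) (α t) else -(D (α 0) (α t)) with hFdef
  have hFpos : ∀ t : ℝ, 0 ≤ t → F t = D (α 0) (α t) := by
    intro t ht; simp only [hFdef]; rw [if_pos ht]
  have hFneg : ∀ t : ℝ, t ≤ 0 → F t = -(D (α 0) (α t)) := by
    intro t ht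
    rcases lt_or_eq_of_le ht with h | h
    · simp only [hFdef]; rw [if_neg (not_le.mpr h)]
    · subst h; simp only [hFdef]; rw [if_pos le_rfl, hD_self]; ring
  have hF0 : F 0 = 0 := by rw [hFpos 0 le_rfl, hD_self]
  have hFlb : ∀ s : ℝ, s ≤ 0 → s - 1 ≤ F s := by
    intro s hs
    rw [hFneg s hs]
    have h1 := hDd 0 s
    have h2 : |(0:ℝ) - s| = -s := by rw [abs_of_nonneg (by linarith)]; ring
    rw [h2] at h1
    linarith
  -- rough continuity of F on each side of 0
  have key3 : ∀ s t : ℝ, s ≤ t → (0 ≤ s ∨ t ≤ 0) → F t ≤ F s + (1 + (t - s)) := by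
    intro s t hst hcase
    rcases hcase with h0s | ht0
    · rw [hFpos s h0s, hFpos t (le_trans h0s hst)]
      have h1 := hD_tri (α 0) (α s) (α t)
      have h2 := hDd s t
      have h3 : |s - t| = t - s := by rw [abs_of_nonpos (by linarith)]; ring
      rw [h3] at h2
      linarith
    · rw [hFneg t ht0, hFneg s (le_trans hst ht0)]
      have h1 := hD_tri (α 0) (α t) (α s)
      have h2 := hDd t s
      have h3 : |t - s| = t - s := abs_of_nonneg (by linarith)
      rw [h3] at h2
      linarith
  -- the two key comparison inequalities between D and increments of F
  have keyLow : ∀ s t : ℝ, s ≤ t → D (α s) (α t) ≤ (F t - F s) + 6 * Λ := by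
    intro s t hst
    rcases le_or_gt 0 s with h0s | hs0
    · rw [hFpos s h0s, hFpos t (le_trans h0s hst)]
      have := hrev 0 s t h0s hst
      linarith
    · rcases le_or_gt t 0 with ht0 | h0t
      · rw [hFneg t ht0, hFneg s (le_trans hst ht0)]
        have h1 := hrev s t 0 hst ht0
        have h2 : D (α t) (α 0) = D (α 0) (α t) := hD_symm _ _
        have h3 : D (α s) (α 0) = D (α 0) (α s) := hD_symm _ _
        linarith
      · rw [hFneg s hs0.le, hFpos t h0t.le]
        have h1 := hD_tri (α s) (α 0) (α t)
        have h2 : D (α s) (α 0) = D (α 0) (α s) := hD_symm _ _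
        linarith
  have keyUp : ∀ s t : ℝ, s ≤ t → F t - F s ≤ D (α s) (α t) + 6 * Λ := by
    intro s t hst
    rcases le_or_gt 0 s with h0s | hs0
    · rw [hFpos s h0s, hFpos t (le_trans h0s hst)]
      have h1 := hD_tri (α 0) (α s) (α t)
      linarith
    · rcases le_or_gt t 0 with ht0 | h0t
      · rw [hFneg t ht0, hFneg s (le_trans hst ht0)]
        have h1 := hD_tri (α 0) (α t) (α s)
        have h2 : D (α t) (α s) = D (α s) (α t) := hD_symm _ _
        linarith
      · rw [hFneg s hs0.le, hFpos t h0t.le]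
        have h1 := hrev s 0 t hs0.le h0t.le
        have h2 : D (α s) (α 0) = D (α 0) (α s) := hD_symm _ _
        linarith
  -- unified construction of the interval and reparametrisation
  have main : ∃ (I : Set ℝ) (r : ℝ → ℝ), I.OrdConnected ∧ MonotoneOn r I ∧
      (∀ v ∈ I, v - 2 ≤ F (r v) ∧ F (r v) ≤ v) ∧
      (∀ u : ℝ, ∃ v ∈ I, (r v ≤ u ∧ F u - F (r v) ≤ 1) ∨ (u ≤ r v ∧ F (r v) - F u ≤ 1)) := by
    by_cases hB : ∃ b : ℝ, ∀ t : ℝ, b ≤ F t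
    · -- Case 2 : F is bounded below
      obtain ⟨b₀, hb₀⟩ := hB
      have hbddR : BddBelow (Set.range F) := ⟨b₀, by rintro y ⟨t, rfl⟩; exact hb₀ t⟩
      have hneR : (Set.range F).Nonempty := ⟨F 0, 0, rfl⟩
      set b := sInf (Set.range F) with hbdef
      have hbF : ∀ u : ℝ, b ≤ F u := fun u => csInf_le hbddR ⟨u, rfl⟩
      obtain ⟨y, hymem, hylt⟩ := exists_lt_of_csInf_lt hneR
        (show sInf (Set.range F) < b + 1 by rw [← hbdef]; linarith)
      obtain ⟨tb, rfl⟩ := hymem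
      -- hylt : F tb < b + 1
      have hbddT : ∀ v : ℝ, BddBelow {t : ℝ | tb ≤ t ∧ v - 1 ≤ F t} :=
        fun v => ⟨tb, fun t ht => ht.1⟩
      have hwin : ∀ v ∈ {v : ℝ | F tb + 1 ≤ v ∧ ∃ t, tb ≤ t ∧ v - 1 ≤ F t},
          v - 2 ≤ F (sInf {t : ℝ | tb ≤ t ∧ v - 1 ≤ F t}) ∧
          F (sInf {t : ℝ | tb ≤ t ∧ v - 1 ≤ F t}) ≤ v := by
        intro v hv
        obtain ⟨hv1, t₁, ht₁⟩ := hv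
        have hne : {t : ℝ | tb ≤ t ∧ v - 1 ≤ F t}.Nonempty := ⟨t₁, ht₁⟩
        have hrtb : tb ≤ sInf {t : ℝ | tb ≤ t ∧ v - 1 ≤ F t} :=
          le_csInf hne (fun t ht => ht.1)
        constructor
        · have := rough_inf_lower F key3 _ hne (hbddT v) (v - 1) (fun t ht => ht.2)
          linarith
        · rcases eq_or_lt_of_le hrtb with heq | hlt
          · rw [← heq]; linarith
          · have := rough_inf_upper F key3 hF0 hFlb _ (v - 1) tb hlt
              (fun s hγs hslt => by
                by_contra hge
                push_neg at hge
                exact absurd (csInf_le (hbddT v) ⟨hγs, hge⟩) (not_le.mpr hslt))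
            linarith
      refine ⟨{v : ℝ | F tb + 1 ≤ v ∧ ∃ t, tb ≤ t ∧ v - 1 ≤ F t},
        fun v => sInf {t : ℝ | tb ≤ t ∧ v - 1 ≤ F t}, ?_, ?_, hwin, ?_⟩
      · refine Set.ordConnected_def.mpr fun x hx y hy z hz => ?_
        obtain ⟨t, ht1, ht2⟩ := hy.2
        exact ⟨le_trans hx.1 hz.1, t, ht1, by linarith [hz.2]⟩
      · intro v hv w hw hvw
        obtain ⟨t, ht⟩ := hw.2
        exact csInf_le_csInf (hbddT v) ⟨t, ht⟩
          (fun t' ht' => ⟨ht'.1, by linarith [ht'.2]⟩)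
      · intro u
        have hv₀ : (F tb + 1) ∈ {v : ℝ | F tb + 1 ≤ v ∧ ∃ t, tb ≤ t ∧ v - 1 ≤ F t} :=
          ⟨le_rfl, tb, le_rfl, by linarith⟩
        have hrv₀ : sInf {t : ℝ | tb ≤ t ∧ F tb + 1 - 1 ≤ F t} = tb :=
          le_antisymm (csInf_le (hbddT _) ⟨le_rfl, by linarith⟩)
            (le_csInf ⟨tb, le_rfl, by linarith⟩ (fun t ht => ht.1))
        rcases le_total u tb with h | h
        · exact ⟨F tb + 1, hv₀, Or.inr ⟨by beta_reduce; rw [hrv₀]; exact h,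
            by beta_reduce; rw [hrv₀]; linarith [hbF u]⟩⟩
        · by_cases hFu : F u ≤ F tb + 1
          · exact ⟨F tb + 1, hv₀, Or.inl ⟨by beta_reduce; rw [hrv₀]; exact h, by beta_reduce; rw [hrv₀]; linarith⟩⟩
          · push_neg at hFu
            have hvI : (F u + 1) ∈ {v : ℝ | F tb + 1 ≤ v ∧ ∃ t, tb ≤ t ∧ v - 1 ≤ F t} :=
              ⟨by linarith, u, h, by linarith⟩
            have hw := hwin _ hvI
            rcases le_total (sInf {t : ℝ | tb ≤ t ∧ F u + 1 - 1 ≤ F t}) u with h' | h'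
            · exact ⟨F u + 1, hvI, Or.inl ⟨h', by linarith [hw.1]⟩⟩
            · exact ⟨F u + 1, hvI, Or.inr ⟨h', by linarith [hw.2]⟩⟩
    · -- Case 1 : F is unbounded below
      push_neg at hB
      have hbddT : ∀ v : ℝ, BddBelow {t : ℝ | v - 1 ≤ F t} := by
        intro v
        obtain ⟨t₀, ht₀⟩ := hB (v - 1 - 6 * Λ)
        refine ⟨t₀, fun s hsv => ?_⟩
        by_contra hlt
        push_neg at hlt
        have h1 := keyLow s t₀ hlt.le
        have h2 := hD_nonneg (α s) (α t₀)
        have h3 : v - 1 ≤ F s := hsv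
        linarith
      have hwin : ∀ v ∈ {v : ℝ | ∃ t, v - 1 ≤ F t},
          v - 2 ≤ F (sInf {t : ℝ | v - 1 ≤ F t}) ∧
          F (sInf {t : ℝ | v - 1 ≤ F t}) ≤ v := by
        intro v hv
        obtain ⟨t₁, ht₁⟩ := hv
        have hne : {t : ℝ | v - 1 ≤ F t}.Nonempty := ⟨t₁, ht₁⟩
        constructor
        · have := rough_inf_lower F key3 _ hne (hbddT v) (v - 1) (fun t ht => ht)
          linarith
        · have := rough_inf_upper F key3 hF0 hFlb _ (v - 1)
            (sInf {t : ℝ | v - 1 ≤ F t} - 1) (by linarith)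
            (fun s hγs hslt => by
              by_contra hge
              push_neg at hge
              exact absurd (csInf_le (hbddT v) hge) (not_le.mpr hslt))
          linarith
      refine ⟨{v : ℝ | ∃ t, v - 1 ≤ F t}, fun v => sInf {t : ℝ | v - 1 ≤ F t},
        ?_, ?_, hwin, ?_⟩
      · refine Set.ordConnected_def.mpr fun x hx y hy z hz => ?_
        obtain ⟨t, ht⟩ := hy
        exact ⟨t, by linarith [hz.2]⟩
      · intro v hv w hw hvw
        obtain ⟨t, ht⟩ := hw
        exact csInf_le_csInf (hbddT v) ⟨t, ht⟩ (fun t' ht' => by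
          have : w - 1 ≤ F t' := ht'
          show v - 1 ≤ F t'
          linarith)
      · intro u
        have hvI : (F u + 1) ∈ {v : ℝ | ∃ t, v - 1 ≤ F t} := ⟨u, by linarith⟩
        have hw := hwin _ hvI
        rcases le_total (sInf {t : ℝ | F u + 1 - 1 ≤ F t}) u with h' | h'
        · exact ⟨F u + 1, hvI, Or.inl ⟨h', by linarith [hw.1]⟩⟩
        · exact ⟨F u + 1, hvI, Or.inr ⟨h', by linarith [hw.2]⟩⟩
  -- assemble the final statement
  obtain ⟨I, r, hord, hmono, hwin, hdens⟩ := main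
  have hq1 : 6 * Λ ≤ max (6 * Λ) 1 := le_max_left _ _
  have hq2 : (1:ℝ) ≤ max (6 * Λ) 1 := le_max_right _ _
  refine ⟨I, hord, r, hmono, ?_, ?_⟩
  · intro s hs t ht
    obtain ⟨ws1, ws2⟩ := hwin s hs
    obtain ⟨wt1, wt2⟩ := hwin t ht
    rcases le_total s t with h | h
    · have hr : r s ≤ r t := hmono hs ht h
      have h1 := keyLow _ _ hr
      have h2 := keyUp _ _ hr
      have habs : |s - t| = t - s := by rw [abs_of_nonpos (by linarith)]; ring
      rw [habs]
      constructor <;> linarith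
    · have hr : r t ≤ r s := hmono ht hs h
      have h1 := keyLow _ _ hr
      have h2 := keyUp _ _ hr
      have hsymm : D (α (r s)) (α (r t)) = D (α (r t)) (α (r s)) := hD_symm _ _
      have habs : |s - t| = s - t := abs_of_nonneg (by linarith)
      rw [habs, hsymm]
      constructor <;> linarith
  · intro u
    obtain ⟨v, hvI, hcase⟩ := hdens u
    refine ⟨v, hvI, ?_⟩
    rcases hcase with ⟨hle, hF1⟩ | ⟨hle, hF1⟩
    · have h1 := keyLow _ _ hle
      have h2 : D (α u) (α (r v)) = D (α (r v)) (α u) := hD_symm _ _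
      rw [h2]; linarith
    · have h1 := keyLow _ _ hle
      linarith
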